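/- arXiv:1507.06077 — 3 statements merged into one kernel-verified Lean document; each statement's English description precedes it below -/
import Mathlib

section
/- Let $J$ be an infinite set and $\lambda,\chi\in\mathbb{R}^J$ satisfy the positive energy condition for $W(A_J)$ (infimum over finitely supported permutations $w$ of $\sum_j\lambda_j(d_{w(j)}-d_j)$ is finite). Let $m<n$ be reals and $r\in\mathbb{R}$. If the set $J_n^{>r}=\{j:\lambda_j=n,\ d_j>r\}$ is infinite, then for every $t<r$ the set $J_m^{<t}=\{j:\lambda_j=m,\ d_j<t\}$ is finite. -/
open scoped BigOperators

/-- A permutation of `J` is finitely supported if it fixes all but finitely many elements. -/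
def IsFinPerm {J : Type*} (w : Equiv.Perm J) : Prop := {j | w j ≠ j}.Finite

/-- A finitely supported sign function: takes values `±1` and equals `1` outside a finite set. -/
def IsSign {J : Type*} (σ : J → ℝ) : Prop :=
  (∀ j, σ j = 1 ∨ σ j = -1) ∧ {j | σ j ≠ 1}.Finite

/-- A finitely supported sign function whose support has even cardinality. -/
def IsEvenSign {J : Type*} (σ : J → ℝ) : Prop :=
  IsSign σ ∧ ∃ F : Finset J, (∀ j, σ j = -1 ↔ j ∈ F) ∧ Even F.card

/-- The energy `λ(w⁻¹.χ - χ) = ∑ⱼ λⱼ (d_{w(j)} - dⱼ)` (a finite sum for `w` finitely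
supported). -/
noncomputable def energyA {J : Type*} (lam d : J → ℝ) (w : Equiv.Perm J) : ℝ :=
  ∑ᶠ j, lam j * (d (w j) - d j)

/-- The energy `λ(σ w⁻¹.χ - χ) = ∑ⱼ λⱼ (σⱼ d_{w(j)} - dⱼ)`. -/
noncomputable def energyB {J : Type*} (lam d σ : J → ℝ) (w : Equiv.Perm J) : ℝ :=
  ∑ᶠ j, lam j * (σ j * d (w j) - d j)

/-- Positive energy condition for `W(A_J)`. -/
def PECA {J : Type*} (lam d : J → ℝ) : Prop :=
  ∃ C : ℝ, ∀ w : Equiv.Perm J, IsFinPerm w → C ≤ energyA lam d w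

/-- Positive energy condition for `W(B_J)`. -/
def PECB {J : Type*} (lam d : J → ℝ) : Prop :=
  ∃ C : ℝ, ∀ (σ : J → ℝ) (w : Equiv.Perm J), IsSign σ → IsFinPerm w → C ≤ energyB lam d σ w

/-- Positive energy condition for `W(D_J)`. -/
def PECD {J : Type*} (lam d : J → ℝ) : Prop :=
  ∃ C : ℝ, ∀ (σ : J → ℝ) (w : Equiv.Perm J), IsEvenSign σ → IsFinPerm w → C ≤ energyB lam d σ w

/-!
If both sets were infinite, we could choose arbitrarily many pairwise disjoint pairs `(a, b)`
with `λ_a = n`, `d_a > r` and `λ_b = m`, `d_b < t`. The transposition `(a b)` has energy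
`(n - m) (d_b - d_a) < -(n - m) (r - t)`, and energies of finitely supported permutations with
disjoint supports add, so products of `k` such transpositions have energy below
`-k (n - m) (r - t)`, contradicting the positive energy condition.
-/

section EnergyA

variable {J : Type*}

lemma IsFinPerm.trans {w v : Equiv.Perm J} (hw : IsFinPerm w) (hv : IsFinPerm v) :
    IsFinPerm (w.trans v) :=
  (hw.union hv).subset fun j hj => by
    by_contra hj'
    simp only [Set.mem_union, Set.mem_ofPred_eq, not_or, not_not] at hj'
    exact hj (by simp [hj'.1, hj'.2])

lemma isFinPerm_swap [DecidableEq J] (a b : J) : IsFinPerm (Equiv.swap a b) :=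
  ((Set.finite_singleton b).insert a).subset fun _ hj =>
    (Equiv.swap_apply_ne_self_iff.mp hj).2

lemma support_energyA_summand_subset (lam d : J → ℝ) (w : Equiv.Perm J) :
    Function.support (fun j => lam j * (d (w j) - d j)) ⊆ {j | w j ≠ j} :=
  fun j hj hwj => hj (by simp [hwj])

lemma energyA_trans_of_disjoint (lam d : J → ℝ) {w v : Equiv.Perm J}
    (hw : IsFinPerm w) (hv : IsFinPerm v) (hdisj : Disjoint {j | w j ≠ j} {j | v j ≠ j}) :
    energyA lam d (w.trans v) = energyA lam d w + energyA lam d v := by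
  have hsummand : ∀ j, lam j * (d (v (w j)) - d j) =
      lam j * (d (w j) - d j) + lam j * (d (v j) - d j) := by
    intro j
    by_cases hwj : w j = j
    · rw [hwj]; ring
    · have hvj : v j = j := not_not.mp (Set.disjoint_left.mp hdisj hwj)
      have hvwj : v (w j) = w j :=
        not_not.mp (Set.disjoint_left.mp hdisj (w.injective.ne hwj))
      rw [hvwj, hvj]; ring
  simp only [energyA, Equiv.trans_apply, hsummand]
  exact finsum_add_distrib (hw.subset (support_energyA_summand_subset lam d w))
    (hv.subset (support_energyA_summand_subset lam d v))

lemma energyA_swap [DecidableEq J] (lam d : J → ℝ) {a b : J} (hab : a ≠ b) :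
    energyA lam d (Equiv.swap a b) = (lam a - lam b) * (d b - d a) := by
  have hsupp : Function.support (fun j => lam j * (d (Equiv.swap a b j) - d j)) ⊆
      ({a, b} : Finset J) := fun j hj => by
    simpa using (Equiv.swap_apply_ne_self_iff.mp (support_energyA_summand_subset lam d _ hj)).2
  rw [energyA, finsum_eq_finsetSum_of_support_subset _ hsupp, Finset.sum_pair hab]
  simp only [Equiv.swap_apply_left, Equiv.swap_apply_right]
  ring

lemma exists_isFinPerm_energyA_le {lam d : J → ℝ} {A B : Set J} (hA : A.Infinite)
    (hB : B.Infinite) {c : ℝ} (hc : 0 < c)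
    (hAB : ∀ a ∈ A, ∀ b ∈ B, (lam a - lam b) * (d b - d a) ≤ -c) (k : ℕ) :
    ∃ w : Equiv.Perm J, IsFinPerm w ∧ energyA lam d w ≤ -(k * c) := by
  classical
  induction k with
  | zero => exact ⟨Equiv.refl J, by simp [IsFinPerm], by simp [energyA]⟩
  | succ k ih =>
    obtain ⟨w, hw, hwE⟩ := ih
    obtain ⟨a, haA, haw⟩ := (hA.sdiff hw).nonempty
    obtain ⟨b, hbB, hbw⟩ := (hB.sdiff (hw.insert a)).nonempty
    have hab : a ≠ b := by
      rintro rfl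
      linarith [hAB a haA a hbB]
    have hdisj : Disjoint {j | w j ≠ j} {j | Equiv.swap a b j ≠ j} := by
      refine Set.disjoint_left.mpr fun j hjw hjs => ?_
      rcases (Equiv.swap_apply_ne_self_iff.mp hjs).2 with rfl | rfl
      · exact haw hjw
      · exact hbw (Set.mem_insert_of_mem _ hjw)
    refine ⟨w.trans (Equiv.swap a b), hw.trans (isFinPerm_swap a b), ?_⟩
    rw [energyA_trans_of_disjoint lam d hw (isFinPerm_swap a b) hdisj, energyA_swap lam d hab]
    push_cast
    linarith [hAB a haA b hbB]

lemma not_PECA_of_infinite {lam d : J → ℝ} {A B : Set J} (hA : A.Infinite) (hB : B.Infinite)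
    {c : ℝ} (hc : 0 < c) (hAB : ∀ a ∈ A, ∀ b ∈ B, (lam a - lam b) * (d b - d a) ≤ -c) :
    ¬ PECA lam d := by
  rintro ⟨C, hC⟩
  obtain ⟨k, hk⟩ := Archimedean.arch (1 - C) hc
  obtain ⟨w, hw, hwE⟩ := exists_isFinPerm_energyA_le hA hB hc hAB k
  rw [nsmul_eq_mul] at hk
  linarith [hC w hw]

end EnergyA

theorem pecA_infinite_finite_general (J : Type*) (lam d : J → ℝ)
    (hpec : PECA lam d) (m n r : ℝ) (hmn : m < n)
    (h : {j | lam j = n ∧ r < d j}.Infinite) :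
    ∀ t < r, {j | lam j = m ∧ d j < t}.Finite := by
  intro t ht
  by_contra hfin
  refine not_PECA_of_infinite h hfin (mul_pos (sub_pos.mpr hmn) (sub_pos.mpr ht)) ?_ hpec
  rintro a ⟨rfl, hra⟩ b ⟨rfl, hbt⟩
  nlinarith

theorem pecA_infinite_finite (J : Type*) [Infinite J] (lam d : J → ℝ)
    (hpec : PECA lam d) (m n r : ℝ) (hmn : m < n)
    (h : {j | lam j = n ∧ r < d j}.Infinite) :
    ∀ t < r, {j | lam j = m ∧ d j < t}.Finite :=
  pecA_infinite_finite_general J lam d hpec m n r hmn h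
end

section
/- Let $J$ be an infinite set and $\lambda=(\lambda_j),\chi=(d_j)\in\mathbb{R}^J$ satisfy the positive energy condition for $W(D_J)$. If $m,n$ are in the range of $\lambda$ with $|m|<|n|$, then $\{d_j: \lambda_j=m\}$ is bounded. -/
open scoped BigOperators

/-!
Swapping two indices `i ≠ j`, with either no sign change or a sign change at both of them, gives
two admissible elements of `W(D_J)` whose energies are `(λⱼ - λᵢ)(dᵢ - dⱼ)` and
`-(λᵢ + λⱼ)(dᵢ + dⱼ)`. Fix `j₀` with `λ_{j₀} = n`. For `λᵢ = m` both energies are affine in `dᵢ`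
with slopes `n - m` and `-(n + m)`, whose product `m² - n²` is negative; a uniform lower bound on
both therefore bounds `dᵢ` from both sides.
-/

section Affine

variable {S : Set ℝ} {a b C : ℝ}

lemma bddBelow_of_forall_le_affine (ha : 0 < a) (h : ∀ x ∈ S, C ≤ a * x + b) : BddBelow S :=
  ⟨(C - b) / a, fun x hx => by rw [div_le_iff₀ ha]; linarith [h x hx]⟩

lemma bddAbove_of_forall_le_affine (ha : a < 0) (h : ∀ x ∈ S, C ≤ a * x + b) : BddAbove S :=
  ⟨(C - b) / a, fun x hx => by rw [le_div_iff_of_neg ha]; linarith [h x hx]⟩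

lemma bddBelow_and_bddAbove_of_forall_le_affine {a' b' : ℝ} (ha : a * a' < 0)
    (h : ∀ x ∈ S, C ≤ a * x + b ∧ C ≤ a' * x + b') : BddBelow S ∧ BddAbove S := by
  have h₁ : ∀ x ∈ S, C ≤ a * x + b := fun x hx => (h x hx).1
  have h₂ : ∀ x ∈ S, C ≤ a' * x + b' := fun x hx => (h x hx).2
  rcases mul_neg_iff.mp ha with ⟨ha, ha'⟩ | ⟨ha, ha'⟩
  · exact ⟨bddBelow_of_forall_le_affine ha h₁, bddAbove_of_forall_le_affine ha' h₂⟩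
  · exact ⟨bddBelow_of_forall_le_affine ha' h₂, bddAbove_of_forall_le_affine ha h₁⟩

end Affine

section Swap

variable {J : Type*} [DecidableEq J]

lemma isFinPerm_swap_s11 (i j : J) : IsFinPerm (Equiv.swap i j) :=
  (Set.toFinite {i, j}).subset fun k hk => by
    by_contra hij
    simp only [Set.mem_insert_iff, Set.mem_singleton_iff, not_or] at hij
    exact hk (Equiv.swap_apply_of_ne_of_ne hij.1 hij.2)

lemma isEvenSign_ite_mem {F : Finset J} (hF : Even F.card) :
    IsEvenSign fun k => if k ∈ F then (-1 : ℝ) else 1 := by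
  refine ⟨⟨fun k => ?_, (F.finite_toSet).subset fun k hk => ?_⟩, F, fun k => ?_, hF⟩
  · by_cases hkF : k ∈ F <;> simp [hkF]
  · by_contra hkF
    exact hk (if_neg hkF)
  · by_cases hkF : k ∈ F <;> norm_num [hkF]

lemma energyB_swap (lam d σ : J → ℝ) {i j : J} (hij : i ≠ j)
    (hσ : ∀ k, k ≠ i → k ≠ j → σ k = 1) :
    energyB lam d σ (Equiv.swap i j) =
      lam i * (σ i * d j - d i) + lam j * (σ j * d i - d j) := by
  have hsupp : (Function.support fun k => lam k * (σ k * d (Equiv.swap i j k) - d k))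
      ⊆ ({i, j} : Finset J) := by
    intro k hk
    by_contra hkij
    simp only [Finset.coe_insert, Finset.coe_singleton, Set.mem_insert_iff,
      Set.mem_singleton_iff, not_or] at hkij
    simp [Function.mem_support, Equiv.swap_apply_of_ne_of_ne hkij.1 hkij.2,
      hσ k hkij.1 hkij.2] at hk
  rw [energyB, finsum_eq_sum_of_support_subset _ hsupp, Finset.sum_pair hij,
    Equiv.swap_apply_left, Equiv.swap_apply_right]

end Swap

lemma PECD.exists_le_swap_energies {J : Type*} {lam d : J → ℝ} (h : PECD lam d) :
    ∃ C : ℝ, ∀ i j, i ≠ j →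
      C ≤ (lam j - lam i) * (d i - d j) ∧ C ≤ -(lam i + lam j) * (d i + d j) := by
  classical
  obtain ⟨C, hC⟩ := h
  refine ⟨C, fun i j hij => ⟨?_, ?_⟩⟩
  · have hE := hC _ _ (isEvenSign_ite_mem (F := ∅) Even.zero) (isFinPerm_swap_s11 i j)
    rw [energyB_swap lam d _ hij fun _ _ _ => if_neg (Finset.notMem_empty _)] at hE
    simp only [Finset.notMem_empty, if_false] at hE
    linarith
  · have hF : Even ({i, j} : Finset J).card := by rw [Finset.card_pair hij]; exact even_two
    have hE := hC _ _ (isEvenSign_ite_mem hF) (isFinPerm_swap_s11 i j)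
    rw [energyB_swap lam d _ hij fun k hki hkj => by simp [hki, hkj]] at hE
    simp only [Finset.mem_insert, Finset.mem_singleton, true_or, or_true, if_true] at hE
    linarith

theorem pecD_bounded_general (J : Type*) (lam d : J → ℝ)
    (hpec : PECD lam d) (m n : ℝ) (hn : n ∈ Set.range lam)
    (hmn : |m| < |n|) :
    BddBelow (d '' {j | lam j = m}) ∧ BddAbove (d '' {j | lam j = m}) := by
  obtain ⟨C, hC⟩ := hpec.exists_le_swap_energies
  obtain ⟨j₀, rfl⟩ := hn
  refine bddBelow_and_bddAbove_of_forall_le_affine (C := C)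
    (a := lam j₀ - m) (b := -(lam j₀ - m) * d j₀)
    (a' := -(m + lam j₀)) (b' := -(m + lam j₀) * d j₀) ?_ ?_
  · nlinarith [sq_lt_sq.mpr hmn]
  · rintro _ ⟨i, hi : lam i = m, rfl⟩
    have hij : i ≠ j₀ := by
      rintro rfl
      exact lt_irrefl _ (hi ▸ hmn)
    obtain ⟨h₁, h₂⟩ := hC i j₀ hij
    rw [hi] at h₁ h₂
    constructor <;> linarith

theorem pecD_bounded (J : Type*) [Infinite J] (lam d : J → ℝ)
    (hpec : PECD lam d) (m n : ℝ) (hm : m ∈ Set.range lam) (hn : n ∈ Set.range lam)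
    (hmn : |m| < |n|) :
    BddBelow (d '' {j | lam j = m}) ∧ BddAbove (d '' {j | lam j = m}) :=
  pecD_bounded_general J lam d hpec m n hn hmn
end

section
/- Let $J$ be an infinite set, $\lambda=(\lambda_j)_{j\in J}\in\mathbb{R}^J$ with finite range, and $\chi=(d_j)_{j\in J}\in\mathbb{R}^J$. Then the following are equivalent: (1) $(J,\lambda,\chi)$ satisfies the positive energy condition for $W(B_J)$: the infimum over finitely supported permutations $w$ of $J$ and finitely supported sign functions $\sigma$ of $\sum_j\lambda_j(\sigma_jd_{w(j)}-d_j)$ is finite; (2) $\chi=\chi_0+\chi_1$ where $\chi_1\in\ell^1(J)$ and $\chi_0=(d'_j)$ satisfies $\lambda_jd'_j\le0$ for all $j$ and $|\lambda_i|<|\lambda_j|\implies|d'_i|\le|d'_j|$ for all $i,j\in J$. -/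
open scoped BigOperators

/-!
Backward direction: write `d = d₀ + d₁`. The `d₁`-part of the energy is at least
`-2 (sup |λ|) ‖d₁‖₁`. In the `d₀`-part the signs cost at most `|λⱼ| |d₀(w j)|`, and
`-λⱼ d₀ⱼ = |λⱼ| |d₀ⱼ|`; since `|d₀|` monovaries with `|λ|`, the rearrangement inequality
makes this part nonnegative.

Forward direction: with `w = 1`, the energy bound says that `(λ d)⁺` is summable. Swapping
disjoint pairs `x ↔ y` with optimal signs has energy at most
`∑ (|λ_y| - |λ_x|)(|d_y| - |d_x|)`. If infinitely many cheap pairs existed between two levels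
`u < u'` of `|λ|`, the energy would be unbounded below. So there is a threshold `t` such that the part of `|d|` above `t` is
summable on level `u` and the part of `|d|` below `t` is summable on level `u'`. Since `|λ|`
takes only finitely many values, these thresholds can be chosen to fit together. Clamping `|d|`
level by level into the resulting intervals gives some `b` that monovaries with `|λ|` and
satisfies `|d| - b ∈ ℓ¹`. Finally `d₀ = ±b`, with the sign chosen opposite to that of `λ`.
-/

open Finset

section

variable {J : Type*}

section Energy

variable {lam d : J → ℝ}

lemma isFinPerm_of_forall_notMem {w : Equiv.Perm J} {S : Finset J} (hw : ∀ j ∉ S, w j = j) :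
    IsFinPerm w :=
  S.finite_toSet.subset fun j hj => by_contra fun hjS => hj (hw j hjS)

lemma isSign_ite_mem [DecidableEq J] (F : Finset J) :
    IsSign fun j => if j ∈ F then (-1 : ℝ) else 1 :=
  ⟨fun j => by dsimp only; split_ifs <;> simp,
    F.finite_toSet.subset fun j hj => by_contra fun hjF => hj (if_neg hjF)⟩

lemma IsSign.exists_finset_of_isFinPerm {σ : J → ℝ} {w : Equiv.Perm J} (hσ : IsSign σ)
    (hw : IsFinPerm w) : ∃ S : Finset J, (∀ j ∉ S, σ j = 1) ∧ ∀ j ∉ S, w j = j := by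
  classical
  exact ⟨hw.toFinset ∪ hσ.2.toFinset,
    fun j hj => by_contra fun h => hj (mem_union_right _ (hσ.2.mem_toFinset.2 h)),
    fun j hj => by_contra fun h => hj (mem_union_left _ (hw.mem_toFinset.2 h))⟩

lemma energyB_eq_sum {σ : J → ℝ} {w : Equiv.Perm J} {S : Finset J}
    (hσ : ∀ j ∉ S, σ j = 1) (hw : ∀ j ∉ S, w j = j) :
    energyB lam d σ w = ∑ j ∈ S, lam j * (σ j * d (w j) - d j) :=
  finsum_eq_sum_of_support_subset _ fun j hj => by
    by_contra hjS
    simp [hσ j hjS, hw j hjS] at hj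

-- The witness is `σⱼ = -sign (λⱼ d_{w(j)})`, the optimal signs for `w`.
lemma exists_isSign_energyB_eq {w : Equiv.Perm J} {S : Finset J} (hw : ∀ j ∉ S, w j = j) :
    ∃ σ, IsSign σ ∧ energyB lam d σ w = -∑ j ∈ S, (|lam j * d (w j)| + lam j * d j) := by
  classical
  set F := S.filter fun j => 0 < lam j * d (w j)
  refine ⟨fun j => if j ∈ F then -1 else 1, isSign_ite_mem F, ?_⟩
  rw [energyB_eq_sum (fun j hj => if_neg fun h => hj (mem_filter.1 h).1) hw, ← sum_neg_distrib]
  refine sum_congr rfl fun j hj => ?_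
  by_cases h : 0 < lam j * d (w j)
  · rw [if_pos (mem_filter.2 ⟨hj, h⟩), abs_of_pos h]; ring
  · rw [if_neg (show j ∉ F from fun h' => h (mem_filter.1 h').2), abs_of_nonpos (not_lt.1 h)]
    ring

lemma summable_posPart_mul_of_pecB (h : PECB lam d) : Summable fun j => (lam j * d j)⁺ := by
  obtain ⟨C, hC⟩ := h
  refine summable_of_sum_le (c := -C / 2) (fun j => posPart_nonneg _) fun S => ?_
  obtain ⟨σ, hσ, hE⟩ := exists_isSign_energyB_eq (lam := lam) (d := d) (w := 1) (S := S)
    fun _ _ => rfl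
  have hle := hC σ 1 hσ (isFinPerm_of_forall_notMem (S := ∅) fun _ _ => rfl)
  simp only [hE, Equiv.Perm.coe_one, id_eq, abs_add_eq_two_nsmul_posPart, nsmul_eq_mul,
    Nat.cast_ofNat, ← mul_sum] at hle
  linarith

end Energy

section Pairing

lemma exists_perm_swap_pairs [DecidableEq J] {T : Finset J} {f : J → J} (hinj : Set.InjOn f T)
    (hfT : ∀ x ∈ T, f x ∉ T) :
    ∃ w : Equiv.Perm J,
      (∀ x ∈ T, w x = f x ∧ w (f x) = x) ∧ ∀ y ∉ T ∪ T.image f, w y = y := by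
  induction T using Finset.induction_on with
  | empty => exact ⟨1, by simp, fun _ _ => rfl⟩
  | insert a s ha ih =>
    obtain ⟨w, hws, hw⟩ :=
      ih (hinj.mono (by simp)) fun x hx hfx => hfT x (by simp [hx]) (by simp [hfx])
    have hfa : f a ∉ insert a s := hfT a (mem_insert_self a s)
    have hne : ∀ x ∈ s, f x ≠ a ∧ f x ≠ f a ∧ x ≠ f a := fun x hx =>
      ⟨fun h => hfT x (mem_insert_of_mem hx) (h ▸ mem_insert_self a s),
        fun h => ha (hinj (by simp [hx]) (by simp) h ▸ hx),
        fun h => hfa (h ▸ mem_insert_of_mem hx)⟩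
    refine ⟨Equiv.swap a (f a) * w, fun x hx => ?_, fun y hy => ?_⟩
    · rcases mem_insert.1 hx with rfl | hx
      · refine ⟨?_, ?_⟩
        · have : x ∉ s ∪ s.image f := by
            simp only [mem_union, mem_image, not_or, not_exists, not_and]
            exact ⟨ha, fun y hy => (hne y hy).1⟩
          rw [Equiv.Perm.mul_apply, hw x this, Equiv.swap_apply_left]
        · have : f x ∉ s ∪ s.image f := by
            simp only [mem_union, mem_image, not_or, not_exists, not_and]
            exact ⟨fun h => hfa (mem_insert_of_mem h), fun y hy => (hne y hy).2.1⟩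
          rw [Equiv.Perm.mul_apply, hw (f x) this, Equiv.swap_apply_right]
      · obtain ⟨hwx, hwfx⟩ := hws x hx
        obtain ⟨h1, h2, h3⟩ := hne x hx
        refine ⟨?_, ?_⟩
        · rw [Equiv.Perm.mul_apply, hwx, Equiv.swap_apply_of_ne_of_ne h1 h2]
        · rw [Equiv.Perm.mul_apply, hwfx,
            Equiv.swap_apply_of_ne_of_ne (ne_of_mem_of_not_mem hx ha) h3]
    · simp only [mem_union, mem_insert, mem_image, not_or, exists_eq_or_imp] at hy
      rw [Equiv.Perm.mul_apply, hw y (by simp [hy]),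
        Equiv.swap_apply_of_ne_of_ne hy.1.1 (Ne.symm hy.2.1)]

lemma neg_abs_mul_sub_add_le (a A b B : ℝ) :
    (-|a * B| - a * A) + (-|b * A| - b * B) ≤ (|b| - |a|) * (|B| - |A|) := by
  have h1 : -(a * A) ≤ |a| * |A| := by rw [← abs_mul]; exact neg_le_abs _
  have h2 : -(b * B) ≤ |b| * |B| := by rw [← abs_mul]; exact neg_le_abs _
  rw [abs_mul, abs_mul]
  nlinarith [abs_nonneg a, abs_nonneg b, abs_nonneg A, abs_nonneg B]

variable {lam d : J → ℝ} {C : ℝ}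

lemma le_sum_pair_energy
    (hC : ∀ σ w, IsSign σ → IsFinPerm w → C ≤ energyB lam d σ w)
    {T : Finset J} {f : J → J} (hinj : Set.InjOn f T) (hfT : ∀ x ∈ T, f x ∉ T) :
    C ≤ ∑ x ∈ T, (|lam (f x)| - |lam x|) * (|d (f x)| - |d x|) := by
  classical
  obtain ⟨w, hwT, hw⟩ := exists_perm_swap_pairs hinj hfT
  obtain ⟨σ, hσ, hE⟩ := exists_isSign_energyB_eq (lam := lam) (d := d) hw
  have hdisj : Disjoint T (T.image f) := disjoint_left.2 fun x hx hx' => by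
    obtain ⟨y, hy, rfl⟩ := mem_image.1 hx'
    exact hfT y hy hx
  calc C ≤ energyB lam d σ w := hC σ w hσ (isFinPerm_of_forall_notMem hw)
    _ = ∑ x ∈ T, ((-|lam x * d (w x)| - lam x * d x)
          + (-|lam (f x) * d (w (f x))| - lam (f x) * d (f x))) := by
      rw [hE, sum_union hdisj, sum_image hinj, ← sum_add_distrib, ← sum_neg_distrib]
      exact sum_congr rfl fun x _ => by ring
    _ ≤ _ := sum_le_sum fun x hx => by
      rw [(hwT x hx).1, (hwT x hx).2]
      exact neg_abs_mul_sub_add_le _ _ _ _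

lemma le_pair_energy (hC : ∀ σ w, IsSign σ → IsFinPerm w → C ≤ energyB lam d σ w)
    {x y : J} (hxy : x ≠ y) :
    C ≤ (|lam y| - |lam x|) * (|d y| - |d x|) := by
  simpa using
    le_sum_pair_energy hC (T := {x}) (f := fun _ => y) (by simp) (by simpa using hxy.symm)

lemma exists_injOn_mem (T : Finset J) {U : J → Set J} (hU : ∀ x ∈ T, (U x).Infinite) :
    ∃ f : J → J, Set.InjOn f T ∧ ∀ x ∈ T, f x ∈ U x := by
  classical
  induction T using Finset.induction_on with
  | empty => exact ⟨id, by simp, by simp⟩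
  | insert a s ha ih =>
    obtain ⟨f, hf, hfU⟩ := ih fun x hx => hU x (mem_insert_of_mem hx)
    obtain ⟨y, hyU, hy⟩ := (hU a (mem_insert_self a s)).exists_notMem_finset (s.image f)
    have heq : Set.EqOn f (Function.update f a y) s := fun x hx =>
      (Function.update_of_ne (ne_of_mem_of_not_mem hx ha) _ _).symm
    refine ⟨Function.update f a y, ?_, fun x hx => ?_⟩
    · rw [coe_insert, Set.injOn_insert (mem_coe.not.2 ha), ← heq.image_eq, Function.update_self]
      exact ⟨hf.congr heq, by simpa using hy⟩
    · rcases mem_insert.1 hx with rfl | hx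
      · simpa using hyU
      · rw [← heq hx]
        exact hfU x hx

-- If `g` were not summable, finitely many points of large total `g`, matched to distinct
-- partners, would carry energy below any bound.
lemma summable_of_infinite_partners (h : PECB lam d) {g : J → ℝ} (hg : 0 ≤ g) {c : ℝ}
    (hc : 0 < c)
    (hpart : ∀ x, g x ≠ 0 →
      {y | g y = 0 ∧ (|lam y| - |lam x|) * (|d y| - |d x|) ≤ -(c * g x)}.Infinite) :
    Summable g := by
  classical
  obtain ⟨C, hC⟩ := h
  by_contra hns
  obtain ⟨F, hF⟩ : ∃ F : Finset J, -C / c < ∑ j ∈ F, g j := by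
    by_contra! hbd
    exact hns (summable_of_sum_le hg hbd)
  set T := F.filter (g · ≠ 0)
  obtain ⟨f, hinj, hf⟩ := exists_injOn_mem T fun x hx => hpart x (mem_filter.1 hx).2
  have hpairs := le_sum_pair_energy hC hinj fun x hx hfx => (mem_filter.1 hfx).2 (hf x hx).1
  have hcost :
      ∑ x ∈ T, (|lam (f x)| - |lam x|) * (|d (f x)| - |d x|) ≤ -(c * ∑ x ∈ F, g x) := by
    rw [← sum_filter_ne_zero F, mul_sum, ← sum_neg_distrib]
    exact sum_le_sum fun x hx => (hf x hx).2
  rw [div_lt_iff₀ hc] at hF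
  linarith

end Pairing

section Threshold

lemma summable_indicator_posPart_of_le {X : Set J} {f g : J → ℝ} (hfg : ∀ j, f j ≤ g j)
    (hg : Summable (X.indicator fun j => (g j)⁺)) : Summable (X.indicator fun j => (f j)⁺) :=
  hg.of_nonneg_of_le (Set.indicator_nonneg fun _ _ => posPart_nonneg _)
    fun _ => Set.indicator_le_indicator (posPart_mono (hfg _))

lemma mem_and_pos_of_indicator_posPart_ne_zero {X : Set J} {f : J → ℝ} {j : J}
    (h : X.indicator (fun j => (f j)⁺) j ≠ 0) : j ∈ X ∧ 0 < f j := by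
  obtain ⟨hj, hf⟩ := Set.indicator_apply_ne_zero.1 h
  exact ⟨hj, not_le.1 fun hle => hf (posPart_eq_zero.2 hle)⟩

lemma infinite_support_of_not_summable {g : J → ℝ} (h : ¬Summable g) :
    (Function.support g).Infinite :=
  fun hfin => h (summable_of_hasFiniteSupport hfin)

variable {lam d : J → ℝ}

lemma exists_threshold (h : PECB lam d) {u u' : ℝ} (hlt : u < u') (hu' : ∃ y, |lam y| = u') :
    ∃ t, 0 ≤ t ∧ Summable ({j | |lam j| = u}.indicator fun j => (|d j| - t)⁺) ∧
      Summable ({j | |lam j| = u'}.indicator fun j => (t - |d j|)⁺) := by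
  set X := {j | |lam j| = u}
  set Y := {j | |lam j| = u'}
  set E := {t | 0 ≤ t ∧ Summable (X.indicator fun j => (|d j| - t)⁺)}
  have hXY : ∀ x ∈ X, x ∉ Y := fun x hx hy => hlt.ne (hx.symm.trans hy)
  have hEne : E.Nonempty := by
    obtain ⟨C, hC⟩ := id h
    obtain ⟨y, hy⟩ := hu'
    refine ⟨max 0 (|d y| - C / (u' - u)), le_max_left _ _, ?_⟩
    convert summable_zero with x
    refine Set.indicator_apply_eq_zero.2 fun hx => posPart_eq_zero.2 (sub_nonpos.2 ?_)
    have hpair := le_pair_energy hC fun hxy : x = y => hXY x hx (hxy ▸ hy)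
    rw [hy, show |lam x| = u from hx] at hpair
    refine le_max_of_le_right (le_sub_comm.1 ((div_le_iff₀ (by linarith)).2 ?_))
    linarith
  have hbdd : BddBelow E := ⟨0, fun t ht => ht.1⟩
  set tb := sInf E
  have htb0 : 0 ≤ tb := le_csInf hEne fun t ht => ht.1
  have hgt : ∀ s, tb < s → s ∈ E := fun s hs => by
    obtain ⟨t, htE, hts⟩ := (csInf_lt_iff hbdd hEne).1 hs
    exact ⟨htE.1.trans hts.le, summable_indicator_posPart_of_le (fun j => by linarith) htE.2⟩
  have hc : 0 < (u' - u) / 2 := by linarith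
  have hnonneg : ∀ (Z : Set J) (f : J → ℝ), 0 ≤ Z.indicator fun j => (f j)⁺ :=
    fun Z f => Set.indicator_nonneg fun _ _ => posPart_nonneg _
  -- each `y ∈ Y` below `tb` pairs with the infinitely many `x ∈ X` above `(tb + |d y|) / 2`
  have htbD : Summable (Y.indicator fun j => (tb - |d j|)⁺) := by
    refine summable_of_infinite_partners h (hnonneg _ _) hc fun y hy => ?_
    obtain ⟨hyY, hdy⟩ := mem_and_pos_of_indicator_posPart_ne_zero hy
    have hnot : ¬Summable (X.indicator fun j => (|d j| - (tb + |d y|) / 2)⁺) := fun hsum =>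
      (csInf_le hbdd ⟨by positivity, hsum⟩).not_gt (by linarith)
    refine (infinite_support_of_not_summable hnot).mono fun x hx => ?_
    obtain ⟨hxX, hdx⟩ := mem_and_pos_of_indicator_posPart_ne_zero hx
    refine ⟨Set.indicator_of_notMem (hXY x hxX) _, ?_⟩
    rw [show |lam x| = u from hxX, show |lam y| = u' from hyY, Set.indicator_of_mem hyY,
      posPart_eq_self.2 hdy.le]
    nlinarith
  by_cases hD : ∃ s, tb < s ∧ Summable (Y.indicator fun j => (s - |d j|)⁺)
  · obtain ⟨s, hs, hsD⟩ := hD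
    exact ⟨s, (hgt s hs).1, (hgt s hs).2, hsD⟩
  push Not at hD
  -- each `x ∈ X` above `tb` pairs with the infinitely many `y ∈ Y` below `(tb + |d x|) / 2`
  refine ⟨tb, htb0, summable_of_infinite_partners h (hnonneg _ _) hc fun x hx => ?_, htbD⟩
  obtain ⟨hxX, hdx⟩ := mem_and_pos_of_indicator_posPart_ne_zero hx
  refine (infinite_support_of_not_summable (hD ((tb + |d x|) / 2) (by linarith))).mono
    fun y hy => ?_
  obtain ⟨hyY, hdy⟩ := mem_and_pos_of_indicator_posPart_ne_zero hy
  refine ⟨Set.indicator_of_notMem (fun hyX => hXY y hyX hyY) _, ?_⟩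
  rw [show |lam x| = u from hxX, show |lam y| = u' from hyY, Set.indicator_of_mem hxX,
    posPart_eq_self.2 hdx.le]
  nlinarith

end Threshold

section Assembly

lemma exists_lower_upper_bounds {ι : Type*} [LinearOrder ι] [Finite ι] {E D : ι → Set ℝ}
    (hD : ∀ v, IsLowerSet (D v)) (hD0 : ∀ v, 0 ∈ D v)
    (h : ∀ u v, u < v → ∃ t, 0 ≤ t ∧ t ∈ E u ∧ t ∈ D v) :
    ∃ lo hi : ι → ℝ, (∀ v, 0 ≤ lo v ∧ lo v ∈ D v) ∧ (∀ u v, u < v → hi u ∈ E u) ∧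
      ∀ u v, u < v → max (lo u) (hi u) ≤ lo v := by
  choose! τ hτ0 hτE hτD using h
  -- the least threshold above `u` is admissible for `u` and for every higher level at once
  have hp : ∀ u, ∃ p, 0 ≤ p ∧ ∀ v, u < v → p ∈ E u ∧ p ∈ D v := by
    intro u
    rcases (Set.Ioi u).eq_empty_or_nonempty with hemp | hne
    · exact ⟨0, le_rfl, fun v huv => (hemp ▸ huv : v ∈ (∅ : Set ι)).elim⟩
    obtain ⟨v₀, hv₀, hmin⟩ := Set.exists_min_image _ (τ u) (Set.toFinite _) hne
    exact ⟨τ u v₀, hτ0 u v₀ hv₀,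
      fun v huv => ⟨hτE u v₀ hv₀, hD v (hmin v huv) (hτD u v huv)⟩⟩
  choose p hp0 hp using hp
  have hfin : ∀ v, (insert 0 (p '' Set.Iio v)).Finite := fun v => Set.toFinite _
  refine ⟨fun v => sSup (insert 0 (p '' Set.Iio v)), p, fun v => ⟨?_, ?_⟩,
    fun u v huv => (hp u v huv).1, fun u v huv => max_le ?_ ?_⟩
  · exact le_csSup (hfin v).bddAbove (Set.mem_insert _ _)
  · dsimp only
    rcases (Set.insert_nonempty _ _).csSup_mem (hfin v) with h0 | ⟨u, hu, hpu⟩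
    · rw [h0]
      exact hD0 v
    · rw [← hpu]
      exact (hp u v hu).2
  · exact csSup_le_csSup (hfin v).bddAbove (Set.insert_nonempty _ _)
      (Set.insert_subset_insert (Set.image_mono (Set.Iio_subset_Iio huv.le)))
  · exact le_csSup (hfin v).bddAbove (Set.mem_insert_of_mem _ ⟨u, huv, rfl⟩)

lemma abs_sub_max_min_le (x a b : ℝ) : |x - max a (min x b)| ≤ (a - x)⁺ + (x - b)⁺ := by
  have := le_posPart (a - x)
  have := le_posPart (x - b)
  have := posPart_nonneg (a - x)
  have := posPart_nonneg (x - b)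
  rw [abs_le]
  constructor <;> rcases max_cases a (min x b) with ⟨h, _⟩ | ⟨h, _⟩ <;>
    rcases min_cases x b with ⟨h', _⟩ | ⟨h', _⟩ <;> linarith

lemma summable_of_summable_indicator_fiber {ι M : Type*} [Finite ι] [AddCommMonoid M]
    [TopologicalSpace M] [ContinuousAdd M] (ℓ : J → ι) {F : ι → J → M}
    (h : ∀ v, Summable ({j | ℓ j = v}.indicator (F v))) : Summable fun j => F (ℓ j) j := by
  classical
  have := Fintype.ofFinite ι
  refine (summable_sum fun v (_ : v ∈ univ) => h v).congr fun j => ?_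
  simp [Set.indicator_apply]

variable {lam d : J → ℝ}

lemma exists_monovary_approx_abs (h : PECB lam d) (hfin : (Set.range fun j => |lam j|).Finite) :
    ∃ b : J → ℝ, (∀ j, 0 ≤ b j) ∧ Monovary b (fun j => |lam j|) ∧
      Summable fun j => |(|d j| - b j)| := by
  classical
  let ι := Set.range fun j => |lam j|
  have : Finite ι := hfin.to_subtype
  let ℓ : J → ι := fun j => ⟨|lam j|, j, rfl⟩
  have hfib : ∀ v : ι, {j | ℓ j = v} = {j | |lam j| = v} := fun v =>
    Set.ext fun j => Subtype.ext_iff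
  obtain ⟨lo, hi, hlo, hhi, hlohi⟩ := exists_lower_upper_bounds
    (E := fun v : ι => {t | Summable ({j | |lam j| = v}.indicator fun j => (|d j| - t)⁺)})
    (D := fun v : ι => {t | Summable ({j | |lam j| = v}.indicator fun j => (t - |d j|)⁺)})
    (fun v s t hts hs => summable_indicator_posPart_of_le (fun j => by linarith) hs)
    (fun v => summable_zero.congr fun j => by simp)
    (fun u v huv => exists_threshold h huv v.2)
  let b : J → ℝ := fun j =>
    max (lo (ℓ j)) (if IsMax (ℓ j) then |d j| else min |d j| (hi (ℓ j)))
  refine ⟨b, fun j => (hlo _).1.trans (le_max_left _ _), fun i j hij => ?_, ?_⟩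
  · have hlt : ℓ i < ℓ j := hij
    calc b i ≤ max (lo (ℓ i)) (hi (ℓ i)) := by
          simp only [b, if_neg hlt.not_isMax]
          exact max_le_max le_rfl (min_le_right _ _)
      _ ≤ lo (ℓ j) := hlohi _ _ hlt
      _ ≤ b j := le_max_left _ _
  · let F : ι → J → ℝ := fun v j =>
      (lo v - |d j|)⁺ + if IsMax v then 0 else (|d j| - hi v)⁺
    have hF : ∀ v, Summable ({j | ℓ j = v}.indicator (F v)) := by
      intro v
      rw [hfib, Set.indicator_add]
      refine (hlo v).2.add ?_
      split_ifs with hv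
      · simp
      · obtain ⟨w, hvw⟩ := not_isMax_iff.1 hv
        exact hhi v w hvw
    refine (summable_of_summable_indicator_fiber ℓ hF).of_nonneg_of_le (fun _ => abs_nonneg _)
      fun j => ?_
    simp only [b, F]
    split_ifs
    · simpa using abs_sub_max_min_le (|d j|) (lo (ℓ j)) (|d j|)
    · exact abs_sub_max_min_le _ _ _

end Assembly

section Decomposition

lemma exists_sign_mul_nonpos (x y : ℝ) :
    ∃ s : ℝ, |s| = 1 ∧ s * x ≤ 0 ∧ (x * y ≤ 0 → 0 ≤ s * y) := by
  rcases lt_trichotomy x 0 with hx | rfl | hx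
  · exact ⟨1, by simp, by linarith, fun h => by nlinarith⟩
  · rcases le_total 0 y with hy | hy
    · exact ⟨1, by simp, by simp, fun _ => by linarith⟩
    · exact ⟨-1, by simp, by simp, fun _ => by linarith⟩
  · exact ⟨-1, by simp, by linarith, fun h => by nlinarith⟩

lemma exists_pos_le_abs_of_finite {s : Set ℝ} (hs : s.Finite) :
    ∃ ε > 0, ∀ x ∈ s, x ≠ 0 → ε ≤ |x| := by
  rcases (s \ {0}).eq_empty_or_nonempty with he | hne
  · exact ⟨1, one_pos, fun x hx hx0 => (he.subset ⟨hx, hx0⟩ : x ∈ (∅ : Set ℝ)).elim⟩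
  obtain ⟨x₀, hx₀, hmin⟩ := Set.exists_min_image _ abs hs.sdiff hne
  exact ⟨|x₀|, abs_pos.2 hx₀.2, fun x hx hx0 => hmin x ⟨hx, hx0⟩⟩

lemma abs_sub_mul_le {ε l x s b : ℝ} (hε : 0 < ε) (hl : l ≠ 0 → ε ≤ |l|) (hs : |s| = 1)
    (hsx : l * x ≤ 0 → 0 ≤ s * x) : |x - s * b| ≤ 2 / ε * (l * x)⁺ + |(|x| - b)| := by
  have hmid : |s * (|x|) - s * b| = |(|x| - b)| := by rw [← mul_sub, abs_mul, hs, one_mul]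
  have hfirst : |x - s * (|x|)| ≤ 2 / ε * (l * x)⁺ := by
    rcases le_or_gt (l * x) 0 with hlx | hlx
    · have hs2 : s * s = 1 := by rw [← abs_mul_abs_self, hs, one_mul]
      have : s * |x| = x := by
        rw [← one_mul |x|, ← hs, ← abs_mul, abs_of_nonneg (hsx hlx), ← mul_assoc, hs2,
          one_mul]
      rw [this, sub_self, abs_zero]
      positivity
    · have hεx : ε * |x| ≤ (l * x)⁺ := by
        rw [posPart_eq_self.2 hlx.le, ← abs_of_pos hlx, abs_mul]
        exact mul_le_mul_of_nonneg_right (hl (left_ne_zero_of_mul hlx.ne')) (abs_nonneg x)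
      calc |x - s * (|x|)| ≤ |x| + |s * (|x|)| := abs_sub _ _
        _ = 2 / ε * (ε * |x|) := by rw [abs_mul, hs, abs_abs]; field_simp; ring
        _ ≤ 2 / ε * (l * x)⁺ := by gcongr
  calc |x - s * b| ≤ |x - s * (|x|)| + |s * (|x|) - s * b| := abs_sub_le _ _ _
    _ ≤ _ := by rw [hmid]; gcongr

lemma exists_decomposition_of_monovary_approx {lam d b : J → ℝ} {ε : ℝ} (hε : 0 < ε)
    (hlam : ∀ j, lam j ≠ 0 → ε ≤ |lam j|) (hpos : Summable fun j => (lam j * d j)⁺)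
    (hb0 : ∀ j, 0 ≤ b j) (hbmono : Monovary b fun j => |lam j|)
    (hb : Summable fun j => |(|d j| - b j)|) :
    ∃ d₀ d₁ : J → ℝ, (∀ j, d j = d₀ j + d₁ j) ∧ (Summable fun j => |d₁ j|) ∧
      (∀ j, lam j * d₀ j ≤ 0) ∧ Monovary (fun j => |d₀ j|) fun j => |lam j| := by
  choose s hs hslam hsd using fun j => exists_sign_mul_nonpos (lam j) (d j)
  have habs : ∀ j, |s j * b j| = b j := fun j => by
    rw [abs_mul, hs, one_mul, abs_of_nonneg (hb0 j)]
  refine ⟨fun j => s j * b j, fun j => d j - s j * b j, fun j => by ring, ?_, fun j => ?_,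
    fun i j hij => ?_⟩
  · exact ((hpos.mul_left (2 / ε)).add hb).of_nonneg_of_le (fun _ => abs_nonneg _)
      fun j => abs_sub_mul_le hε (hlam j) (hs j) (hsd j)
  · have := mul_nonpos_of_nonpos_of_nonneg (hslam j) (hb0 j)
    linarith [show lam j * (s j * b j) = s j * lam j * b j by ring]
  · simp only [habs]
    exact hbmono hij

end Decomposition

section Backward

variable {lam σ : J → ℝ} {w : Equiv.Perm J} {S : Finset J}

lemma sum_energy_nonneg_of_monovary {e : J → ℝ} (hσ : ∀ j, |σ j| = 1)
    (hw : {x | w x ≠ x} ⊆ S) (hsign : ∀ j, lam j * e j ≤ 0)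
    (hmono : Monovary (fun j => |e j|) fun j => |lam j|) :
    0 ≤ ∑ j ∈ S, lam j * (σ j * e (w j) - e j) := by
  have hre : ∑ j ∈ S, |e (w j)| • |lam j| ≤ ∑ j ∈ S, |e j| • |lam j| :=
    (hmono.monovaryOn _).sum_comp_perm_smul_le_sum_smul hw
  have hterm : ∀ j, |e j| * |lam j| - |e (w j)| * |lam j| ≤ lam j * (σ j * e (w j) - e j) := by
    intro j
    have h1 : |e j| * |lam j| = -(lam j * e j) := by
      rw [mul_comm, ← abs_mul, abs_of_nonpos (hsign j)]
    have h2 : |lam j * (σ j * e (w j))| = |e (w j)| * |lam j| := by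
      rw [abs_mul, abs_mul, hσ, one_mul, mul_comm]
    linarith [neg_abs_le (lam j * (σ j * e (w j)))]
  calc 0 ≤ ∑ j ∈ S, (|e j| * |lam j| - |e (w j)| * |lam j|) := by
        rw [sum_sub_distrib, sub_nonneg]
        simpa only [smul_eq_mul] using hre
    _ ≤ _ := sum_le_sum fun j _ => hterm j

lemma neg_le_sum_energy {L : ℝ} (hL : ∀ j, |lam j| ≤ L) {e : J → ℝ}
    (hσ : ∀ j, |σ j| = 1) (hw : {x | w x ≠ x} ⊆ S) :
    -(2 * L * ∑ j ∈ S, |e j|) ≤ ∑ j ∈ S, lam j * (σ j * e (w j) - e j) := by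
  have hperm : ∑ j ∈ S, |e (w j)| = ∑ j ∈ S, |e j| := w.sum_comp S (fun j => |e j|) hw
  have hterm : ∀ j, -(L * |e (w j)| + L * |e j|) ≤ lam j * (σ j * e (w j) - e j) := by
    intro j
    have : |lam j * (σ j * e (w j) - e j)| ≤ L * |e (w j)| + L * |e j| :=
      calc |lam j * (σ j * e (w j) - e j)| ≤ |lam j| * (|σ j * e (w j)| + |e j|) := by
            rw [abs_mul]
            exact mul_le_mul_of_nonneg_left (abs_sub _ _) (abs_nonneg _)
        _ ≤ L * (|e (w j)| + |e j|) := by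
            rw [abs_mul, hσ, one_mul]
            exact mul_le_mul_of_nonneg_right (hL j) (by positivity)
        _ = L * |e (w j)| + L * |e j| := mul_add _ _ _
    linarith [neg_abs_le (lam j * (σ j * e (w j) - e j))]
  calc -(2 * L * ∑ j ∈ S, |e j|) = ∑ j ∈ S, -(L * |e (w j)| + L * |e j|) := by
        rw [sum_neg_distrib, sum_add_distrib, ← mul_sum, ← mul_sum, hperm]
        ring
    _ ≤ _ := sum_le_sum fun j _ => hterm j

lemma pecB_of_decomposition {d d₀ d₁ : J → ℝ} (hlam : BddAbove (Set.range fun j => |lam j|))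
    (hd : ∀ j, d j = d₀ j + d₁ j) (hd₁ : Summable fun j => |d₁ j|)
    (hsign : ∀ j, lam j * d₀ j ≤ 0) (hmono : Monovary (fun j => |d₀ j|) fun j => |lam j|) :
    PECB lam d := by
  obtain ⟨L, hL0, hL⟩ := hlam.exists_ge 0
  refine ⟨-(2 * L * ∑' j, |d₁ j|), fun σ w hσ hw => ?_⟩
  obtain ⟨S, hσS, hwS⟩ := hσ.exists_finset_of_isFinPerm hw
  have hsupp : {x | w x ≠ x} ⊆ S := fun x hx => by_contra fun hxS => hx (hwS x hxS)
  have hσ1 : ∀ j, |σ j| = 1 := fun j => by rcases hσ.1 j with h | h <;> simp [h]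
  have h₀ := sum_energy_nonneg_of_monovary hσ1 hsupp hsign hmono
  have h₁ := neg_le_sum_energy (fun j => hL _ ⟨j, rfl⟩) hσ1 hsupp (e := d₁)
  have htsum := mul_le_mul_of_nonneg_left (hd₁.sum_le_tsum S fun j _ => abs_nonneg _)
    (by positivity : (0 : ℝ) ≤ 2 * L)
  have hsplit : ∑ j ∈ S, lam j * (σ j * d (w j) - d j) =
      ∑ j ∈ S, lam j * (σ j * d₀ (w j) - d₀ j) + ∑ j ∈ S, lam j * (σ j * d₁ (w j) - d₁ j) := by
    rw [← sum_add_distrib]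
    exact sum_congr rfl fun j _ => by rw [hd, hd]; ring
  rw [energyB_eq_sum hσS hwS, hsplit]
  linarith

end Backward

end

theorem pecB_characterisation_general (J : Type*) (lam d : J → ℝ)
    (hfin : (Set.range lam).Finite) :
    PECB lam d ↔
      ∃ d₀ d₁ : J → ℝ, (∀ j, d j = d₀ j + d₁ j) ∧ (Summable fun j => |d₁ j|) ∧
        (∀ j, lam j * d₀ j ≤ 0) ∧
        ∀ i j : J, |lam i| < |lam j| → |d₀ i| ≤ |d₀ j| := by
  have hfin_abs : (Set.range fun j => |lam j|).Finite := by
    have h := hfin.image abs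
    rwa [← Set.range_comp] at h
  refine ⟨fun h => ?_, fun ⟨d₀, d₁, hd, hd₁, hsign, hmono⟩ =>
    pecB_of_decomposition hfin_abs.bddAbove hd hd₁ hsign fun i j => hmono i j⟩
  obtain ⟨ε, hε, hεlam⟩ := exists_pos_le_abs_of_finite hfin
  obtain ⟨b, hb0, hbmono, hb⟩ := exists_monovary_approx_abs h hfin_abs
  exact exists_decomposition_of_monovary_approx hε (fun j => hεlam _ ⟨j, rfl⟩)
    (summable_posPart_mul_of_pecB h) hb0 hbmono hb

theorem pecB_characterisation (J : Type*) [Infinite J] (lam d : J → ℝ)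
    (hfin : (Set.range lam).Finite) :
    PECB lam d ↔
      ∃ d₀ d₁ : J → ℝ, (∀ j, d j = d₀ j + d₁ j) ∧ (Summable fun j => |d₁ j|) ∧
        (∀ j, lam j * d₀ j ≤ 0) ∧
        ∀ i j : J, |lam i| < |lam j| → |d₀ i| ≤ |d₀ j| :=
  pecB_characterisation_general J lam d hfin
end
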